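/- Let n ≥ k ≥ 2 be positive integers. Then the probability that a uniformly random graph G on the vertex set [n] (each of the C(n,2) possible edges present independently with probability 1/2) is a k-Ramsey graph equals (-1)^{C(n,k)} · 2^{(1 − C(k,2))·C(n,k)} · Q_{n,k}(1 − 2^{C(k,2) − 1}). Equivalently, the number of k-Ramsey graphs on [n] equals (-1)^{C(n,k)} · 2^{C(n,2) + (1 − C(k,2))·C(n,k)} · Q_{n,k}(1 − 2^{C(k,2)−1}). -/

import Mathlib

open Finset

/-- A graph is `k`-Ramsey if it has no clique of size `k` and no independent set of size `k`. -/
def IsRamseyGraph (k : ℕ) {V : Type*} (G : SimpleGraph V) : Prop :=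
  (¬ ∃ s : Finset V, G.IsNClique k s) ∧ (¬ ∃ s : Finset V, Gᶜ.IsNClique k s)

/-- The set of `k`-element subsets of `[n]`. -/
def ksubsets (n k : ℕ) : Finset (Finset (Fin n)) :=
  Finset.powersetCard k (Finset.univ : Finset (Fin n))

/-- The set `B` of assignments `h` associating to each `k`-element subset `S` of `[n]`
a graph on the vertex set `S` (given by its edge set, a set of `2`-element subsets of `S`)
such that every `|E(h_S)|` is even and every `2`-element subset `e` of `[n]` lies in
`E(h_S)` for an even number of `S`.  An assignment is encoded as a function on all finsets
of `Fin n`, required to be `∅` off the `k`-element subsets. -/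
def RamseyB (n k : ℕ) : Finset (Finset (Fin n) → Finset (Finset (Fin n))) :=
  Finset.univ.filter fun h =>
    (∀ S ∈ ksubsets n k, h S ⊆ Finset.powersetCard 2 S ∧ Even (h S).card) ∧
    (∀ S, S ∉ ksubsets n k → h S = ∅) ∧
    (∀ e ∈ Finset.powersetCard 2 (Finset.univ : Finset (Fin n)),
      Even ((ksubsets n k).filter fun S => e ∈ h S).card)

/-- The polynomial `Q_{n,k}(t) = Σ_{h ∈ B} t^{|Empty(h)|}`, where `Empty(h)` is the set of
`k`-element subsets `S` with `h_S` empty. -/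
noncomputable def Qnk (n k : ℕ) : Polynomial ℤ :=
  ∑ h ∈ RamseyB n k,
    Polynomial.X ^ ((ksubsets n k).filter fun S => h S = ∅).card

/-!
Encode a graph on `[n]` by its edge set `W` and put `x_e = 1` for `e ∈ W`, `x_e = -1` otherwise.
For a `k`-set `S` with `m = C(k,2)` pairs, the indicator that `S` is neither a clique nor
independent is `1 - 2^{-m} (∏ (1 + x_e) + ∏ (1 - x_e)) = Σ_{A ⊆ E(S), |A| even} c(A) x^A`, where
`c(∅) = 1 - 2^{1-m}` and `c(A) = -2^{1-m}` otherwise. Multiplying over all `S` and summing over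
`W`, the character sum `Σ_W ∏_S x^{A_S}` vanishes unless every pair lies in an even number of the
`A_S`, in which case it is `2^{C(n,2)}`. The surviving families `(A_S)` are exactly `B`, and
`∏_S c(A_S) = (-2^{1-m})^{C(n,k)} (1 - 2^{m-1})^{|Empty|}`.
-/

section Spin

variable {β : Type*} [DecidableEq β]

def spin (W : Finset β) (e : β) : ℝ := if e ∈ W then 1 else -1

lemma one_add_neg_one_pow (n : ℕ) : (1 : ℝ) + (-1) ^ n = if Even n then 2 else 0 := by
  rcases n.even_or_odd with hn | hn
  · rw [if_pos hn, hn.neg_one_pow]; norm_num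
  · rw [if_neg (Nat.not_even_iff_odd.mpr hn), hn.neg_one_pow]; norm_num

lemma prod_spin_add_one (s W : Finset β) :
    ∏ e ∈ s, (spin W e + 1) = if s ⊆ W then 2 ^ #s else 0 := by
  have h (e : β) : spin W e + 1 = if e ∈ W then 2 else 0 := by
    unfold spin; split_ifs <;> norm_num
  simp only [h, prod_ite_zero, prod_const, subset_iff]

lemma prod_one_sub_spin (s W : Finset β) :
    ∏ e ∈ s, (1 - spin W e) = if Disjoint s W then 2 ^ #s else 0 := by
  have h (e : β) : 1 - spin W e = if e ∉ W then 2 else 0 := by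
    unfold spin; split_ifs <;> norm_num
  simp only [h, prod_ite_zero, prod_const, disjoint_left]

def evenSubsets (s : Finset β) : Finset (Finset β) := {A ∈ s.powerset | Even #A}

lemma prod_spin_add_one_add_prod_one_sub_spin (s W : Finset β) :
    ∏ e ∈ s, (spin W e + 1) + ∏ e ∈ s, (1 - spin W e) =
      2 * ∑ A ∈ evenSubsets s, ∏ e ∈ A, spin W e := by
  have h₁ : ∏ e ∈ s, (spin W e + 1) = ∑ A ∈ s.powerset, ∏ e ∈ A, spin W e := by
    simpa using prod_add (spin W) 1 s
  have h₂ : ∏ e ∈ s, (1 - spin W e) = ∑ A ∈ s.powerset, (-1) ^ #A * ∏ e ∈ A, spin W e := by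
    simpa [neg_add_eq_sub, prod_neg] using prod_add (fun e => -spin W e) 1 s
  rw [h₁, h₂, ← sum_add_distrib, evenSubsets, sum_filter, mul_sum]
  refine sum_congr rfl fun A _ => ?_
  rw [← one_add_mul, one_add_neg_one_pow]
  split_ifs <;> ring

noncomputable def mixedCoeff (m : ℕ) (A : Finset β) : ℝ := (if A = ∅ then 1 else 0) - 2 / 2 ^ m

lemma ite_mixed_eq_sum_evenSubsets (s W : Finset β) (hs : s.Nonempty) :
    (if ¬ s ⊆ W ∧ ¬ Disjoint s W then 1 else 0 : ℝ) =
      ∑ A ∈ evenSubsets s, mixedCoeff #s A * ∏ e ∈ A, spin W e := by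
  have hsum : ∑ A ∈ evenSubsets s, mixedCoeff #s A * ∏ e ∈ A, spin W e =
      1 - (∏ e ∈ s, (spin W e + 1) + ∏ e ∈ s, (1 - spin W e)) / 2 ^ #s := by
    have hempty : ∅ ∈ evenSubsets s := by simp [evenSubsets]
    rw [prod_spin_add_one_add_prod_one_sub_spin]
    simp only [mixedCoeff, sub_mul, sum_sub_distrib, ite_mul, one_mul, zero_mul, sum_ite_eq',
      if_pos hempty, prod_empty, ← mul_sum]
    ring
  obtain ⟨x, hx⟩ := hs
  have hboth : ¬ (s ⊆ W ∧ Disjoint s W) := fun ⟨hsub, hdisj⟩ => disjoint_left.mp hdisj hx (hsub hx)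
  rw [hsum, prod_spin_add_one, prod_one_sub_spin]
  split_ifs <;> simp_all

lemma sum_powerset_prod_prod_spin {ι : Type*} (E : Finset β) (I : Finset ι) (h : ι → Finset β)
    (hh : ∀ i ∈ I, h i ⊆ E) :
    ∑ W ∈ E.powerset, ∏ i ∈ I, ∏ e ∈ h i, spin W e =
      if ∀ e ∈ E, Even #{i ∈ I | e ∈ h i} then 2 ^ #E else 0 := by
  set D : β → ℕ := fun e => #{i ∈ I | e ∈ h i}
  have hW : ∀ W ∈ E.powerset, ∏ i ∈ I, ∏ e ∈ h i, spin W e = ∏ e ∈ E \ W, (-1 : ℝ) ^ D e := by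
    intro W hW
    calc ∏ i ∈ I, ∏ e ∈ h i, spin W e
        = ∏ i ∈ I, ∏ e ∈ E, if e ∈ h i then spin W e else 1 :=
          prod_congr rfl fun i hi => by rw [prod_ite_mem, inter_eq_right.mpr (hh i hi)]
      _ = ∏ e ∈ E, spin W e ^ D e := by
          rw [prod_comm]; simp only [D, ← prod_filter, prod_const]
      _ = ∏ e ∈ E \ W, (-1 : ℝ) ^ D e := by
          simp only [spin, ite_pow, one_pow, prod_ite, prod_const_one, one_mul,
            filter_notMem_eq_sdiff]
  have hfactor := prod_add (fun _ => (1 : ℝ)) (fun e => (-1) ^ D e) E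
  simp only [prod_const_one, one_mul] at hfactor
  rw [sum_congr rfl hW, ← hfactor]
  simp only [one_add_neg_one_pow, prod_ite_zero, prod_const, D]

lemma mixedCoeff_eq {m : ℕ} (hm : 1 ≤ m) (A : Finset β) :
    mixedCoeff m A = -(2 / 2 ^ m) * if A = ∅ then 1 - 2 ^ (m - 1) else 1 := by
  have h : (2 : ℝ) ^ m = 2 * 2 ^ (m - 1) := by rw [← pow_succ']; congr 1; omega
  unfold mixedCoeff
  split_ifs
  · field_simp; rw [h]; ring
  · ring

lemma prod_mixedCoeff {ι : Type*} {m : ℕ} (hm : 1 ≤ m) (I : Finset ι) (h : ι → Finset β) :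
    ∏ i ∈ I, mixedCoeff m (h i) = (-(2 / 2 ^ m)) ^ #I * (1 - 2 ^ (m - 1)) ^ #{i ∈ I | h i = ∅} := by
  simp only [mixedCoeff_eq hm, prod_mul_distrib, prod_const, ← prod_filter]

end Spin

lemma prod_sum_eq_sum_piFinset {ι κ R : Type*} [Fintype ι] [DecidableEq ι] [CommSemiring R]
    (I : Finset ι) (t : ι → Finset κ) (d : κ) (f : ι → κ → R) :
    ∏ i ∈ I, ∑ j ∈ t i, f i j =
      ∑ g ∈ Fintype.piFinset (fun i => if i ∈ I then t i else {d}), ∏ i ∈ I, f i (g i) := by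
  have h := prod_univ_sum (fun i => if i ∈ I then t i else {d})
    (fun i j => if i ∈ I then f i j else 1)
  have hfactor (i : ι) : ∑ j ∈ (if i ∈ I then t i else {d}), (if i ∈ I then f i j else 1) =
      if i ∈ I then ∑ j ∈ t i, f i j else 1 := by
    split_ifs <;> simp
  simpa only [hfactor, prod_ite_mem, univ_inter] using h

section EdgePairs

variable {V : Type*} [DecidableEq V]

lemma forall_mem_powersetCard_two {S : Finset V} {p : Finset V → Prop} :
    (∀ e ∈ powersetCard 2 S, p e) ↔ ∀ a ∈ S, ∀ b ∈ S, a ≠ b → p {a, b} := by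
  constructor
  · intro h a ha b hb hab
    exact h _ (mem_powersetCard.mpr ⟨insert_subset ha (singleton_subset_iff.mpr hb), card_pair hab⟩)
  · intro h e he
    obtain ⟨heS, hcard⟩ := mem_powersetCard.mp he
    obtain ⟨a, b, hab, rfl⟩ := card_eq_two.mp hcard
    exact h a (heS (by simp)) b (heS (by simp)) hab

variable [Fintype V]

open Classical in
noncomputable def edgePairs (G : SimpleGraph V) : Finset (Finset V) :=
  {e ∈ powersetCard 2 univ | G.IsClique (e : Set V)}

open Classical in
lemma edgePairs_subset (G : SimpleGraph V) : edgePairs G ⊆ powersetCard 2 univ :=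
  filter_subset _ _

lemma pair_mem_edgePairs {G : SimpleGraph V} {a b : V} : {a, b} ∈ edgePairs G ↔ G.Adj a b := by
  simp only [edgePairs, mem_filter, mem_powersetCard_univ, card_pair_eq_two_iff, coe_pair,
    SimpleGraph.isClique_pair]
  exact ⟨fun h => h.2 h.1, fun h => ⟨h.ne, fun _ => h⟩⟩

lemma powersetCard_two_subset_edgePairs_iff {G : SimpleGraph V} {S : Finset V} :
    powersetCard 2 S ⊆ edgePairs G ↔ G.IsClique (S : Set V) := by
  rw [subset_iff, forall_mem_powersetCard_two]
  simp only [pair_mem_edgePairs, SimpleGraph.isClique_iff, Set.Pairwise, mem_coe]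

lemma disjoint_powersetCard_two_edgePairs_iff {G : SimpleGraph V} {S : Finset V} :
    Disjoint (powersetCard 2 S) (edgePairs G) ↔ Gᶜ.IsClique (S : Set V) := by
  simp only [disjoint_left, forall_mem_powersetCard_two, pair_mem_edgePairs,
    SimpleGraph.isClique_iff, Set.Pairwise, mem_coe, SimpleGraph.compl_adj]
  grind

lemma isRamseyGraph_iff_edgePairs {k : ℕ} {G : SimpleGraph V} :
    IsRamseyGraph k G ↔ ∀ S ∈ powersetCard k univ,
      ¬ powersetCard 2 S ⊆ edgePairs G ∧ ¬ Disjoint (powersetCard 2 S) (edgePairs G) := by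
  simp only [IsRamseyGraph, SimpleGraph.isNClique_iff, powersetCard_two_subset_edgePairs_iff,
    disjoint_powersetCard_two_edgePairs_iff, mem_powersetCard_univ]
  grind

lemma edgePairs_fromRel {W : Finset (Finset V)} (hW : W ⊆ powersetCard 2 univ) :
    edgePairs (SimpleGraph.fromRel fun a b => {a, b} ∈ W) = W := by
  ext e
  by_cases he : e ∈ powersetCard 2 univ
  · obtain ⟨a, b, hab, rfl⟩ := card_eq_two.mp (mem_powersetCard_univ.mp he)
    rw [pair_mem_edgePairs, SimpleGraph.fromRel_adj, pair_comm b a, or_self]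
    exact and_iff_right hab
  · exact iff_of_false (fun h => he (edgePairs_subset _ h)) (fun h => he (hW h))

lemma fromRel_edgePairs (G : SimpleGraph V) :
    SimpleGraph.fromRel (fun a b => {a, b} ∈ edgePairs G) = G := by
  ext a b
  simp only [SimpleGraph.fromRel_adj, pair_mem_edgePairs, G.adj_comm b a, or_self]
  exact ⟨And.right, fun h => ⟨h.ne, h⟩⟩

lemma card_isRamseyGraph_eq_card_filter (k : ℕ) :
    Nat.card {G : SimpleGraph V // IsRamseyGraph k G} =
      #{W ∈ (powersetCard 2 (univ : Finset V)).powerset | ∀ S ∈ powersetCard k univ,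
        ¬ powersetCard 2 S ⊆ W ∧ ¬ Disjoint (powersetCard 2 S) W} := by
  classical
  rw [Nat.card_eq_fintype_card, Fintype.card_subtype]
  refine card_nbij' edgePairs (fun W => SimpleGraph.fromRel fun a b => {a, b} ∈ W) ?_ ?_ ?_ ?_
  · intro G hG
    simp only [mem_coe, mem_filter, mem_univ, true_and] at hG ⊢
    exact ⟨mem_powerset.mpr (edgePairs_subset G), isRamseyGraph_iff_edgePairs.mp hG⟩
  · intro W hW
    simp only [mem_coe, mem_filter, mem_univ, true_and, mem_powerset] at hW ⊢
    rw [isRamseyGraph_iff_edgePairs, edgePairs_fromRel hW.1]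
    exact hW.2
  · intro G _
    exact fromRel_edgePairs G
  · intro W hW
    simp only [mem_coe, mem_filter, mem_powerset] at hW
    exact edgePairs_fromRel hW.1

end EdgePairs

def evenAssignments (n k : ℕ) : Finset (Finset (Fin n) → Finset (Finset (Fin n))) :=
  Fintype.piFinset fun S => if S ∈ ksubsets n k then evenSubsets (powersetCard 2 S) else {∅}

lemma mem_evenAssignments {n k : ℕ} {h : Finset (Fin n) → Finset (Finset (Fin n))} :
    h ∈ evenAssignments n k ↔
      (∀ S ∈ ksubsets n k, h S ⊆ powersetCard 2 S ∧ Even #(h S)) ∧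
        ∀ S, S ∉ ksubsets n k → h S = ∅ := by
  simp only [evenAssignments, Fintype.mem_piFinset, evenSubsets]
  constructor
  · intro H
    exact ⟨fun S hS => by simpa [hS] using H S, fun S hS => by simpa [hS] using H S⟩
  · rintro ⟨H₁, H₂⟩ S
    by_cases hS : S ∈ ksubsets n k <;> simp [hS, H₁, H₂]

lemma filter_evenAssignments_eq_ramseyB (n k : ℕ) :
    {h ∈ evenAssignments n k | ∀ e ∈ powersetCard 2 univ, Even #{S ∈ ksubsets n k | e ∈ h S}} =
      RamseyB n k := by
  ext h
  simp only [mem_filter, mem_evenAssignments, RamseyB, mem_univ, true_and, and_assoc]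

theorem card_isRamseyGraph_eq_aeval_Qnk {n k : ℕ} (hk : 2 ≤ k) :
    (Nat.card {G : SimpleGraph (Fin n) // IsRamseyGraph k G} : ℝ) =
      2 ^ n.choose 2 * (-(2 / 2 ^ k.choose 2)) ^ n.choose k *
        Polynomial.aeval ((1 : ℝ) - 2 ^ (k.choose 2 - 1)) (Qnk n k) := by
  set E : Finset (Finset (Fin n)) := powersetCard 2 univ
  have hE : #E = n.choose 2 := by simp [E]
  have hK : #(ksubsets n k) = n.choose k := by simp [ksubsets]
  have hEdges : ∀ S ∈ ksubsets n k, #(powersetCard 2 S) = k.choose 2 := fun S hS => by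
    rw [card_powersetCard, mem_powersetCard_univ.mp hS]
  have hNonempty : ∀ S ∈ ksubsets n k, (powersetCard 2 S).Nonempty := fun S hS =>
    card_pos.mp ((hEdges S hS).symm ▸ Nat.choose_pos hk)
  rw [card_isRamseyGraph_eq_card_filter, ← sum_boole]
  calc ∑ W ∈ E.powerset, (if ∀ S ∈ ksubsets n k,
          ¬ powersetCard 2 S ⊆ W ∧ ¬ Disjoint (powersetCard 2 S) W then (1 : ℝ) else 0)
      = ∑ W ∈ E.powerset, ∏ S ∈ ksubsets n k, ∑ A ∈ evenSubsets (powersetCard 2 S),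
          mixedCoeff (k.choose 2) A * ∏ e ∈ A, spin W e := by
        refine sum_congr rfl fun W _ => ?_
        rw [← prod_congr rfl fun S hS => by
          rw [← hEdges S hS, ← ite_mixed_eq_sum_evenSubsets _ W (hNonempty S hS)]]
        -- the `∀ S ∈ ksubsets n k` here is decided via `Fintype`, in `prod_boole` via `Finset`
        convert prod_boole.symm
    _ = ∑ h ∈ evenAssignments n k, (∏ S ∈ ksubsets n k, mixedCoeff (k.choose 2) (h S)) *
          ∑ W ∈ E.powerset, ∏ S ∈ ksubsets n k, ∏ e ∈ h S, spin W e := by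
        simp only [prod_sum_eq_sum_piFinset _ _ ∅, prod_mul_distrib, mul_sum]
        exact sum_comm
    _ = 2 ^ n.choose 2 * ∑ h ∈ RamseyB n k, ∏ S ∈ ksubsets n k, mixedCoeff (k.choose 2) (h S) := by
        rw [← filter_evenAssignments_eq_ramseyB, sum_filter, mul_sum]
        refine sum_congr rfl fun h hh => ?_
        rw [sum_powerset_prod_prod_spin _ _ _ fun S hS => ?_, hE]
        · split_ifs <;> ring
        · exact ((mem_evenAssignments.mp hh).1 S hS).1.trans (powersetCard_mono (subset_univ S))
    _ = _ := by
        simp only [prod_mixedCoeff (Nat.choose_pos hk), hK, Qnk, map_sum, Polynomial.aeval_X_pow,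
          mul_sum, mul_assoc]

theorem stmt_9_general (n k : ℕ) (hk : 2 ≤ k) :
    (Nat.card {G : SimpleGraph (Fin n) // IsRamseyGraph k G} : ℝ) / 2 ^ (n.choose 2) =
        (-1 : ℝ) ^ (n.choose k) *
          (2 : ℝ) ^ ((1 - (k.choose 2 : ℤ)) * (n.choose k : ℤ)) *
          Polynomial.aeval ((1 : ℝ) - 2 ^ (k.choose 2 - 1)) (Qnk n k) ∧
      (Nat.card {G : SimpleGraph (Fin n) // IsRamseyGraph k G} : ℝ) =
        (-1 : ℝ) ^ (n.choose k) *
          (2 : ℝ) ^ ((n.choose 2 : ℤ) + (1 - (k.choose 2 : ℤ)) * (n.choose k : ℤ)) *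
          Polynomial.aeval ((1 : ℝ) - 2 ^ (k.choose 2 - 1)) (Qnk n k) := by
  have hcoeff : (-(2 / 2 ^ k.choose 2 : ℝ)) ^ n.choose k =
      (-1) ^ n.choose k * (2 : ℝ) ^ ((1 - (k.choose 2 : ℤ)) * (n.choose k : ℤ)) := by
    rw [neg_pow, zpow_mul, zpow_natCast, zpow_sub₀ two_ne_zero, zpow_one, zpow_natCast,
      div_eq_mul_inv]
  rw [card_isRamseyGraph_eq_aeval_Qnk hk, hcoeff, zpow_add₀ two_ne_zero, zpow_natCast]
  constructor
  · field_simp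
  · ring

theorem stmt_9 (n k : ℕ) (hk : 2 ≤ k) (hkn : k ≤ n) :
    (Nat.card {G : SimpleGraph (Fin n) // IsRamseyGraph k G} : ℝ) / 2 ^ (n.choose 2) =
        (-1 : ℝ) ^ (n.choose k) *
          (2 : ℝ) ^ ((1 - (k.choose 2 : ℤ)) * (n.choose k : ℤ)) *
          Polynomial.aeval ((1 : ℝ) - 2 ^ (k.choose 2 - 1)) (Qnk n k) ∧
      (Nat.card {G : SimpleGraph (Fin n) // IsRamseyGraph k G} : ℝ) =
        (-1 : ℝ) ^ (n.choose k) *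
          (2 : ℝ) ^ ((n.choose 2 : ℤ) + (1 - (k.choose 2 : ℤ)) * (n.choose k : ℤ)) *
          Polynomial.aeval ((1 : ℝ) - 2 ^ (k.choose 2 - 1)) (Qnk n k) :=
  stmt_9_general n k hk
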